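/- arXiv:2006.15900 — 8 statements merged into one kernel-verified Lean document; each statement's English description precedes it below -/
import Mathlib

section
/- Every strategy-proof mechanism for online fair division is also online strategy-proof. -/
/-!
Online fair division with additive utilities (Aleksandrov & Walsh).

Agents are `Fin n`, items `Fin m` arriving in index order. A bid/utility
profile is `Bids n m`. An allocation assigns to each item an optional agent
(`none` = discarded). An online mechanism returns, for every instance, a
probability distribution over allocations, where the distribution over the
first `j` items depends only on the bids for the first `j` items.
-/

open Finset
open scoped Classical

noncomputable section

abbrev Bids (n m : ℕ) := Fin n → Fin m → ℝ
abbrev Alloc (n m : ℕ) := Fin m → Option (Fin n)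

/-- An online mechanism for online fair division. -/
structure OnlineMech where
  /-- probability of returning allocation `π` on bids `v` -/
  d : ∀ (n m : ℕ), Bids n m → Alloc n m → ℝ
  nonneg : ∀ n m v π, 0 ≤ d n m v π
  total : ∀ n m v, ∑ π : Alloc n m, d n m v π = 1
  /-- online: the joint distribution of the allocation of items `o_1,…,o_j`
  depends only on the bids for items `o_1,…,o_j`. -/
  online : ∀ (n m : ℕ) (v w : Bids n m) (j : Fin m),
      (∀ (i : Fin n) (k : Fin m), k ≤ j → v i k = w i k) →
      ∀ σ : Alloc n m,
        ∑ π ∈ univ.filter (fun π : Alloc n m => ∀ k ≤ j, π k = σ k), d n m v π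
      = ∑ π ∈ univ.filter (fun π : Alloc n m => ∀ k ≤ j, π k = σ k), d n m w π

/-- Marginal probability that agent `i` receives item `j` under distribution `d`. -/
def genMarg {n m : ℕ} (d : Alloc n m → ℝ) (j : Fin m) (i : Fin n) : ℝ :=
  ∑ π ∈ univ.filter (fun π : Alloc n m => π j = some i), d π

/-- `p_i(Π_j)`: probability agent `i` gets item `j` under mechanism `M` on bids `v`. -/
def marg (M : OnlineMech) {n m : ℕ} (v : Bids n m) (j : Fin m) (i : Fin n) : ℝ :=
  genMarg (M.d n m v) j i

/-- Non-wasteful: each item is allocated (with probability one in total) only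
among agents bidding positively for it, and is discarded iff no one bids
positively for it. -/
def NonWasteful (M : OnlineMech) : Prop :=
  ∀ (n m : ℕ) (v : Bids n m) (π : Alloc n m), 0 < M.d n m v π →
    ∀ j : Fin m,
      ((∀ i, v i j = 0) → π j = none) ∧
      ((∃ i, 0 < v i j) → π j ≠ none) ∧
      (∀ i, π j = some i → 0 < v i j)

/-- Replace agent `i`'s bid for item `j` by `c`. -/
def setBid {n m : ℕ} (v : Bids n m) (i : Fin n) (j : Fin m) (c : ℝ) : Bids n m :=
  fun a k => if a = i ∧ k = j then c else v a k

/-- Replace agent `i`'s whole bid vector by `b`. -/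
def setAgent {n m : ℕ} (v : Bids n m) (i : Fin n) (b : Fin m → ℝ) : Bids n m :=
  fun a => if a = i then b else v a

/-- Strategy-proof: no agent can strictly increase their expected (true) utility by
reporting any sequence of bids other than their sincere utilities, others sincere. -/
def StrategyProof (M : OnlineMech) : Prop :=
  ∀ (n m : ℕ) (u : Bids n m), (∀ i j, 0 ≤ u i j) →
    ∀ (i : Fin n) (b : Fin m → ℝ), (∀ j, 0 ≤ b j) →
      ∑ j, marg M (setAgent u i b) j i * u i j ≤ ∑ j, marg M u j i * u i j

/-- Step mechanism: an agent's probability for the current item is `0` on a zero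
bid and is invariant under the magnitude of a positive bid (all else fixed). -/
def IsStep (M : OnlineMech) : Prop :=
  ∀ (n m : ℕ) (v : Bids n m) (i : Fin n) (j : Fin m),
    (v i j = 0 → marg M v j i = 0) ∧
    (∀ c : ℝ, 0 < c → 0 < v i j → marg M (setBid v i j c) j i = marg M v j i)

/-- Memoryless mechanism: an agent's probability for item `j` does not depend on
that agent's bids for the earlier items `o_1,…,o_{j-1}` (their bid for `j` and
all other agents' bids being fixed). -/
def Memoryless (M : OnlineMech) : Prop :=
  ∀ (n m : ℕ) (v w : Bids n m) (i : Fin n) (j : Fin m),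
    (∀ a, a ≠ i → v a = w a) → (∀ k : Fin m, j ≤ k → v i k = w i k) →
    marg M v j i = marg M w j i

/-- Online strategy-proof: at each round `j`, no agent can strictly increase their
expected utility over the first `j` items by misreporting only the bid for item
`o_j`, having bid sincerely before (others sincere). -/
def OnlineSP (M : OnlineMech) : Prop :=
  ∀ (n m : ℕ) (u : Bids n m), (∀ i j, 0 ≤ u i j) →
    ∀ (i : Fin n) (j : Fin m) (c : ℝ), 0 ≤ c →
      ∑ h ∈ univ.filter (fun h : Fin m => h ≤ j), marg M (setBid u i j c) h i * u i h
      ≤ ∑ h ∈ univ.filter (fun h : Fin m => h ≤ j), marg M u h i * u i h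

/-- Agents bidding positively for item `j`. -/
def likeSet {n m : ℕ} (v : Bids n m) (j : Fin m) : Finset (Fin n) :=
  univ.filter (fun a : Fin n => 0 < v a j)

/-- Probability of agent `i` for item `j` under the Like mechanism: uniform among
positive bidders. -/
def likeProb {n m : ℕ} (v : Bids n m) (j : Fin m) (i : Fin n) : ℝ :=
  if i ∈ likeSet v j then ((likeSet v j).card : ℝ)⁻¹ else 0

/-- Ex ante equivalence to the Like mechanism: on every instance, every agent
receives every item with the same probability as under Like. -/
def ExAnteLike (M : OnlineMech) : Prop :=
  ∀ (n m : ℕ) (u : Bids n m), (∀ i j, 0 ≤ u i j) →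
    ∀ (i : Fin n) (j : Fin m), marg M u j i = likeProb u j i

/-- Envy-free ex ante (sincere bidding). -/
def EFA (M : OnlineMech) : Prop :=
  ∀ (n m : ℕ) (u : Bids n m), (∀ i j, 0 ≤ u i j) →
    ∀ i k : Fin n, ∑ h, marg M u h k * u i h ≤ ∑ h, marg M u h i * u i h

/-- Shared envy-free ex ante: `i`'s expected utility restricted to the items
`k` also likes is at least `i`'s expected utility for `k`'s expected allocation. -/
def SEFA (M : OnlineMech) : Prop :=
  ∀ (n m : ℕ) (u : Bids n m), (∀ i j, 0 ≤ u i j) →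
    ∀ i k : Fin n,
      ∑ h, marg M u h k * u i h
      ≤ ∑ h ∈ univ.filter (fun h : Fin m => 0 < u k h), marg M u h i * u i h

/-- `u_{ik}(π)`: agent `i`'s utility for agent `k`'s bundle in allocation `π`. -/
def util {n m : ℕ} (u : Bids n m) (i k : Fin n) (π : Alloc n m) : ℝ :=
  ∑ j ∈ univ.filter (fun j : Fin m => π j = some k), u i j

/-- Pareto efficiency (ex post) of an allocation. -/
def ParetoEff {n m : ℕ} (u : Bids n m) (π : Alloc n m) : Prop :=
  ¬ ∃ π' : Alloc n m,
      (∀ i, util u i i π ≤ util u i i π') ∧ ∃ i, util u i i π < util u i i π'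

/-- Pareto efficiency ex post of a mechanism (sincere bidding). -/
def PEP (M : OnlineMech) : Prop :=
  ∀ (n m : ℕ) (u : Bids n m), (∀ i j, 0 ≤ u i j) →
    ∀ π : Alloc n m, 0 < M.d n m u π → ParetoEff u π

/-- Ex ante Pareto efficiency of a vector of item-allocation probabilities `f`:
no feasible random assignment `q` gives every agent at least their expected
utility and some agent strictly more. -/
def margPEA {n m : ℕ} (u : Bids n m) (f : Fin m → Fin n → ℝ) : Prop :=
  ¬ ∃ q : Fin n → Fin m → ℝ,
      (∀ i j, 0 ≤ q i j) ∧ (∀ j, ∑ i, q i j ≤ 1) ∧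
      (∀ i, ∑ h, f h i * u i h ≤ ∑ h, q i h * u i h) ∧
      (∃ i, ∑ h, f h i * u i h < ∑ h, q i h * u i h)

/-- Pareto efficiency ex ante of a mechanism (sincere bidding). -/
def PEA (M : OnlineMech) : Prop :=
  ∀ (n m : ℕ) (u : Bids n m), (∀ i j, 0 ≤ u i j) → margPEA u (marg M u)

/-- Envy-freeness ex ante at every prefix of the item sequence. -/
def PrefixEFA (M : OnlineMech) : Prop :=
  ∀ (n m : ℕ) (u : Bids n m), (∀ i j, 0 ≤ u i j) →
    ∀ (j : Fin m) (i k : Fin n),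
      ∑ h ∈ univ.filter (fun h : Fin m => h ≤ j), marg M u h k * u i h
      ≤ ∑ h ∈ univ.filter (fun h : Fin m => h ≤ j), marg M u h i * u i h

/-- The allocation produced by Online Serial Dictator with priority order `σ`
(lower `σ`-value = higher priority): each item goes to the highest-priority
positive bidder, and is discarded if there is none. -/
def osdAlloc {n m : ℕ} (σ : Equiv.Perm (Fin n)) (v : Bids n m) : Alloc n m := fun j =>
  if h : (likeSet v j).Nonempty then
    some (σ.symm (((likeSet v j).image σ).min' (h.image σ))) else none

/-- `i`'s utility for `k`'s bundle restricted to the first `j` items. -/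
def utilUpTo {n m : ℕ} (u : Bids n m) (i k : Fin n) (π : Alloc n m) (j : ℕ) : ℝ :=
  ∑ h ∈ univ.filter (fun h : Fin m => (h : ℕ) < j ∧ π h = some k), u i h

/-- Pareto efficiency of the allocation of the first `j` items. -/
def PEUpTo {n m : ℕ} (u : Bids n m) (π : Alloc n m) (j : ℕ) : Prop :=
  ¬ ∃ π' : Alloc n m,
      (∀ i, utilUpTo u i i π j ≤ utilUpTo u i i π' j) ∧
      ∃ i, utilUpTo u i i π j < utilUpTo u i i π' j

/-- Number of items among `o_1,…,o_{j-1}` held by agent `a` in `π`. -/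
def countBefore {n m : ℕ} (π : Alloc n m) (a : Fin n) (j : Fin m) : ℕ :=
  (univ.filter (fun k : Fin m => k < j ∧ π k = some a)).card

/-- Feasible agents for item `j` under Balanced Like: positive bidders holding
the fewest earlier items among positive bidders. -/
def blFeasSet {n m : ℕ} (u : Bids n m) (π : Alloc n m) (j : Fin m) : Finset (Fin n) :=
  univ.filter (fun a : Fin n =>
    0 < u a j ∧ ∀ b : Fin n, 0 < u b j → countBefore π a j ≤ countBefore π b j)

/-- Probability that Balanced Like returns allocation `π` (product of the
uniform conditional probabilities round by round). -/
def blDist {n m : ℕ} (u : Bids n m) (π : Alloc n m) : ℝ :=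
  ∏ j : Fin m,
    match π j with
    | none => if ∀ i, ¬ 0 < u i j then 1 else 0
    | some i => if i ∈ blFeasSet u π j then ((blFeasSet u π j).card : ℝ)⁻¹ else 0

/-- Probability that the Like mechanism returns allocation `π`. -/
def likeDist {n m : ℕ} (u : Bids n m) (π : Alloc n m) : ℝ :=
  ∏ j : Fin m,
    match π j with
    | none => if ∀ i, ¬ 0 < u i j then 1 else 0
    | some i => if i ∈ likeSet u j then ((likeSet u j).card : ℝ)⁻¹ else 0

/-- Feasible agents for item `j` under Maximum Like: positive bidders with the
maximum bid. -/
def mlFeasSet {n m : ℕ} (u : Bids n m) (j : Fin m) : Finset (Fin n) :=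
  univ.filter (fun a : Fin n => 0 < u a j ∧ ∀ b : Fin n, u b j ≤ u a j)

/-- Probability that Maximum Like returns allocation `π`. -/
def mlDist {n m : ℕ} (u : Bids n m) (π : Alloc n m) : ℝ :=
  ∏ j : Fin m,
    match π j with
    | none => if ∀ i, ¬ 0 < u i j then 1 else 0
    | some i => if i ∈ mlFeasSet u j then ((mlFeasSet u j).card : ℝ)⁻¹ else 0


set_option maxHeartbeats 1000000 in
/-- Prefix marginals depend only on prefix bids. -/
lemma margPrefix (M : OnlineMech) {n m : ℕ} (v w : Bids n m) (j : Fin m)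
    (hvw : ∀ (i : Fin n) (k : Fin m), k ≤ j → v i k = w i k)
    (h : Fin m) (hh : h ≤ j) (i : Fin n) :
    marg M v h i = marg M w h i := by
  unfold marg genMarg
  have key : ∀ d : Alloc n m → ℝ,
      ∑ π ∈ univ.filter (fun π : Alloc n m => π h = some i), d π
      = ∑ σ : Alloc n m,
          ∑ π ∈ (univ.filter (fun π : Alloc n m => π h = some i)).filter
            (fun π => (fun k => if k ≤ j then π k else none) = σ), d π := by
    intro d
    calc ∑ π ∈ univ.filter (fun π : Alloc n m => π h = some i), d π
        = ∑ π ∈ univ.filter (fun π : Alloc n m => π h = some i),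
            ∑ σ : Alloc n m,
              if (fun k => if k ≤ j then π k else none) = σ then d π else 0 := by
          refine Finset.sum_congr rfl (fun π _ => ?_)
          rw [Finset.sum_ite_eq univ _ (fun _ => d π)]
          simp
      _ = ∑ σ : Alloc n m,
            ∑ π ∈ univ.filter (fun π : Alloc n m => π h = some i),
              if (fun k => if k ≤ j then π k else none) = σ then d π else 0 :=
          Finset.sum_comm
      _ = _ := by
          refine Finset.sum_congr rfl (fun σ _ => ?_)
          simp only [Finset.sum_filter]
  rw [key, key]
  refine Finset.sum_congr rfl (fun σ _ => ?_)
  by_cases hσ : σ h = some i ∧ ∀ k : Fin m, ¬ k ≤ j → σ k = none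
  · have hset : (univ.filter (fun π : Alloc n m => π h = some i)).filter
        (fun π => (fun k => if k ≤ j then π k else none) = σ)
        = univ.filter (fun π : Alloc n m => ∀ k ≤ j, π k = σ k) := by
      ext π
      simp only [Finset.mem_filter, Finset.mem_univ, true_and]
      constructor
      · rintro ⟨-, hF⟩ k hk
        have := congrFun hF k
        simpa [hk] using this
      · intro hcyl
        refine ⟨by rw [hcyl h hh]; exact hσ.1, funext fun k => ?_⟩
        by_cases hk : k ≤ j
        · simpa [hk] using hcyl k hk
        · simp [hk, hσ.2 k hk]
    rw [hset]
    exact M.online n m v w j hvw σ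
  · have hset : ∀ d : Alloc n m → ℝ,
        ∑ π ∈ (univ.filter (fun π : Alloc n m => π h = some i)).filter
          (fun π => (fun k => if k ≤ j then π k else none) = σ), d π = 0 := by
      intro d
      apply Finset.sum_eq_zero
      intro π hπ
      exfalso
      simp only [Finset.mem_filter, Finset.mem_univ, true_and] at hπ
      obtain ⟨hπh, hF⟩ := hπ
      apply hσ
      constructor
      · have := congrFun hF h
        simp only [hh, if_pos] at this
        rw [← this, hπh]
      · intro k hk
        have := congrFun hF k
        simpa [hk, eq_comm] using this
    rw [hset, hset]

/-- Every strategy-proof mechanism for online fair division is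
also online strategy-proof. -/
theorem stmt2 (M : OnlineMech) (hsp : StrategyProof M) : OnlineSP M := by
  intro n m u hu i j c hc
  -- truncated true utilities: agent i's utilities after round j set to 0
  set u' : Bids n m := fun a k => if a = i then (if k ≤ j then u i k else 0) else u a k with hu'def
  have hu' : ∀ a k, 0 ≤ u' a k := by
    intro a k
    simp only [hu'def]
    split_ifs <;> first | exact hu _ _ | exact le_rfl
  -- the deviation bid vector
  set b : Fin m → ℝ := fun k => if k = j then c else if k ≤ j then u i k else 0 with hbdef
  have hb : ∀ k, 0 ≤ b k := by
    intro k
    simp only [hbdef]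
    split_ifs <;> first | exact hc | exact hu _ _ | exact le_rfl
  have hSP := hsp n m u' hu' i b hb
  -- u' agrees with u on the prefix
  have hagree1 : ∀ (a : Fin n) (k : Fin m), k ≤ j → u' a k = u a k := by
    intro a k hk
    simp only [hu'def]
    split_ifs with h1
    · subst h1; rfl
    · rfl
  -- setAgent u' i b agrees with setBid u i j c on the prefix
  have hagree2 : ∀ (a : Fin n) (k : Fin m), k ≤ j →
      setAgent u' i b a k = setBid u i j c a k := by
    intro a k hk
    simp only [setAgent, setBid, hbdef, hu'def]
    by_cases h1 : a = i
    · subst h1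
      by_cases h2 : k = j
      · simp [h2]
      · simp [h2, hk]
    · simp [h1]
  -- rewrite RHS of hSP as the prefix sum for u
  have hRHS : ∑ h : Fin m, marg M u' h i * u' i h
      = ∑ h ∈ univ.filter (fun h : Fin m => h ≤ j), marg M u h i * u i h := by
    rw [Finset.sum_filter]
    refine Finset.sum_congr rfl (fun h _ => ?_)
    by_cases hh : h ≤ j
    · rw [if_pos hh, margPrefix M u' u j hagree1 h hh i, hagree1 i h hh]
    · rw [if_neg hh]
      have : u' i h = 0 := by simp [hu'def, hh]
      rw [this, mul_zero]
  have hLHS : ∑ h : Fin m, marg M (setAgent u' i b) h i * u' i h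
      = ∑ h ∈ univ.filter (fun h : Fin m => h ≤ j),
          marg M (setBid u i j c) h i * u i h := by
    rw [Finset.sum_filter]
    refine Finset.sum_congr rfl (fun h _ => ?_)
    by_cases hh : h ≤ j
    · rw [if_pos hh,
        margPrefix M (setAgent u' i b) (setBid u i j c) j
          (fun a k hk => hagree2 a k hk) h hh i, hagree1 i h hh]
    · rw [if_neg hh]
      have : u' i h = 0 := by simp [hu'def, hh]
      rw [this, mul_zero]
  rw [hLHS, hRHS] at hSP
  exact hSP
end
end

section
/- A non-wasteful mechanism for online fair division is strategy-proof and envy-free ex ante if and only if it is ex ante equivalent to the Like mechanism. -/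
/-!
Online fair division with additive utilities (Aleksandrov & Walsh).

Agents are `Fin n`, items `Fin m` arriving in index order. A bid/utility
profile is `Bids n m`. An allocation assigns to each item an optional agent
(`none` = discarded). An online mechanism returns, for every instance, a
probability distribution over allocations, where the distribution over the
first `j` items depends only on the bids for the first `j` items.
-/

open Finset
open scoped Classical

noncomputable section

/-!
Like gives every agent the largest probability of any item it likes, and a misreport can only
lose it its uniform share of such an item; summing over items gives strategy-proofness and EFA.

Conversely, fix an item `j` and set all bids for later items to `0`, which by the online
property does not change the probabilities for `j`. Let `a` be a positive bidder for `j`, with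
probability `p`, and let `a` raise its bid for `j` to `t`. Strategy-proofness forces `p` to be
independent of `t`, and envy-freeness of `a` towards each other positive bidder `b` gives
`p_b t ≤ p t + C_b` with `C_b` independent of `t`. Summing over `b`, non-wastefulness turns this
into `(1 - |L| p) t ≤ C` for all `t > 0`, where `L` is the set of positive bidders, so
`p ≥ 1 / |L|`. Since these probabilities sum to `1`, they all equal `1 / |L|`.
-/

lemma sum_filter_comp_congr {α β : Type*} [Fintype α] [DecidableEq β] (g : α → β)
    {f f' : α → ℝ} (h : ∀ a, ∑ x with g x = g a, f x = ∑ x with g x = g a, f' x)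
    (p : β → Prop) [DecidablePred p] :
    ∑ x with p (g x), f x = ∑ x with p (g x), f' x := by
  have hmaps : ∀ x ∈ univ.filter (fun x => p (g x)),
      g x ∈ (univ.filter (fun x => p (g x))).image g := fun x hx => mem_image_of_mem g hx
  rw [← sum_fiberwise_of_maps_to hmaps f, ← sum_fiberwise_of_maps_to hmaps f']
  refine sum_congr rfl fun b hb => ?_
  obtain ⟨a, ha, rfl⟩ := mem_image.mp hb
  have hfiber : (univ.filter (fun x => p (g x))).filter (fun x => g x = g a)
      = univ.filter (fun x => g x = g a) := by
    ext x
    simp only [mem_filter, mem_univ, true_and, and_iff_right_iff_imp]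
    intro hx
    simpa [hx] using ha
  rw [hfiber, h a]

lemma nonpos_of_forall_pos_mul_le {c K : ℝ} (h : ∀ t, 0 < t → c * t ≤ K) : c ≤ 0 := by
  by_contra! hc
  have := h ((|K| + 1) / c) (by positivity)
  rw [mul_div_cancel₀ _ hc.ne'] at this
  linarith [le_abs_self K]

lemma marg_congr_of_eq_of_le (M : OnlineMech) {n m : ℕ} {v w : Bids n m} {j : Fin m}
    (h : ∀ i k, k ≤ j → v i k = w i k) (i : Fin n) : marg M v j i = marg M w j i := by
  let restrict : Alloc n m → ({k // k ≤ j} → Option (Fin n)) := fun π k => π k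
  have hcyl : ∀ σ : Alloc n m,
      univ.filter (fun π : Alloc n m => restrict π = restrict σ)
        = univ.filter (fun π : Alloc n m => ∀ k ≤ j, π k = σ k) := by
    intro σ
    ext π
    simp [restrict, funext_iff]
  exact sum_filter_comp_congr restrict (fun σ => by rw [hcyl σ]; exact M.online n m v w j h σ)
    (fun τ => τ ⟨j, le_rfl⟩ = some i)

namespace NonWasteful

variable {M : OnlineMech} {n m : ℕ}

lemma marg_eq_zero (hnw : NonWasteful M) {v : Bids n m} {i : Fin n} {j : Fin m}
    (h : ¬ 0 < v i j) : marg M v j i = 0 := by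
  refine sum_eq_zero fun π hπ => ?_
  refine ((M.nonneg n m v π).eq_or_lt).elim Eq.symm fun hd => ?_
  exact absurd ((hnw n m v π hd j).2.2 i (mem_filter.mp hπ).2) h

lemma sum_marg_eq_one (hnw : NonWasteful M) {v : Bids n m} {j : Fin m}
    (h : ∃ i, 0 < v i j) : ∑ i, marg M v j i = 1 := by
  have hnone : ∑ π with π j = none, M.d n m v π = 0 := by
    refine sum_eq_zero fun π hπ => ?_
    refine ((M.nonneg n m v π).eq_or_lt).elim Eq.symm fun hd => ?_
    exact absurd (mem_filter.mp hπ).2 ((hnw n m v π hd j).2.1 h)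
  rw [← M.total n m v, ← sum_fiberwise univ (fun π : Alloc n m => π j), Fintype.sum_option,
    hnone, zero_add]
  rfl

lemma sum_likeSet_marg_eq_one (hnw : NonWasteful M) {v : Bids n m} {j : Fin m}
    (h : (likeSet v j).Nonempty) : ∑ i ∈ likeSet v j, marg M v j i = 1 := by
  obtain ⟨i, hi⟩ := h
  rw [sum_subset (subset_univ _) fun c _ hc => hnw.marg_eq_zero (by simpa [likeSet] using hc)]
  exact hnw.sum_marg_eq_one ⟨i, (mem_filter.mp hi).2⟩

end NonWasteful

section Bids

variable {n m : ℕ}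

lemma setBid_apply_of_ne_right (v : Bids n m) (i : Fin n) {j k : Fin m} (c : ℝ) (hk : k ≠ j)
    (a : Fin n) : setBid v i j c a k = v a k := by
  simp [setBid, hk]

lemma setAgent_setBid_self (v : Bids n m) (i : Fin n) (j : Fin m) (c : ℝ) :
    setAgent v i (setBid v i j c i) = setBid v i j c := by
  funext a k
  by_cases ha : a = i <;> simp [setAgent, setBid, ha]

lemma setBid_setBid_self (v : Bids n m) (i : Fin n) (j : Fin m) (c : ℝ) :
    setBid (setBid v i j c) i j (v i j) = v := by
  funext a k
  by_cases h : a = i ∧ k = j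
  · obtain ⟨rfl, rfl⟩ := h
    simp [setBid]
  · simp only [setBid, if_neg h]

lemma setBid_nonneg {v : Bids n m} (hv : ∀ a k, 0 ≤ v a k) (i : Fin n) (j : Fin m) {c : ℝ}
    (hc : 0 ≤ c) (a : Fin n) (k : Fin m) : 0 ≤ setBid v i j c a k := by
  unfold setBid
  split
  exacts [hc, hv a k]

lemma likeSet_setBid_of_pos {v : Bids n m} {i : Fin n} {j : Fin m} {c : ℝ} (hv : 0 < v i j)
    (hc : 0 < c) : likeSet (setBid v i j c) j = likeSet v j := by
  refine filter_congr fun a _ => ?_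
  by_cases ha : a = i
  · subst ha
    simp [setBid, hv, hc]
  · simp [setBid, ha]

end Bids

section Like

variable {n m : ℕ}

lemma likeProb_nonneg (v : Bids n m) (j : Fin m) (i : Fin n) : 0 ≤ likeProb v j i := by
  unfold likeProb
  split <;> positivity

lemma likeProb_le_of_pos {v : Bids n m} {i : Fin n} {j : Fin m} (hi : 0 < v i j) (k : Fin n) :
    likeProb v j k ≤ likeProb v j i := by
  have hmem : i ∈ likeSet v j := mem_filter.mpr ⟨mem_univ i, hi⟩
  unfold likeProb
  rw [if_pos hmem]
  split <;> simp

lemma likeProb_setAgent_le {u : Bids n m} {i : Fin n} {j : Fin m} (hi : 0 < u i j)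
    (b : Fin m → ℝ) : likeProb (setAgent u i b) j i ≤ likeProb u j i := by
  by_cases hb : 0 < b j
  · have hL : likeSet (setAgent u i b) j = likeSet u j := filter_congr fun a _ => by
      by_cases ha : a = i
      · subst ha
        simp [setAgent, hb, hi]
      · simp [setAgent, ha]
    rw [likeProb, likeProb, hL]
  · have hout : i ∉ likeSet (setAgent u i b) j := fun hmem =>
      hb (by simpa [setAgent] using (mem_filter.mp hmem).2)
    rw [likeProb, if_neg hout]
    exact likeProb_nonneg u j i

end Like

namespace ExAnteLike

variable {M : OnlineMech}

lemma strategyProof (h : ExAnteLike M) : StrategyProof M := by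
  intro n m u hu i b hb
  have hu' : ∀ a k, 0 ≤ setAgent u i b a k := fun a k => by
    unfold setAgent
    split
    exacts [hb k, hu a k]
  refine sum_le_sum fun j _ => ?_
  rw [h n m u hu i j, h n m _ hu' i j]
  rcases (hu i j).eq_or_lt with h0 | hpos
  · simp [← h0]
  · exact mul_le_mul_of_nonneg_right (likeProb_setAgent_le hpos b) hpos.le

lemma efa (h : ExAnteLike M) : EFA M := by
  intro n m u hu i k
  refine sum_le_sum fun j _ => ?_
  rw [h n m u hu i j, h n m u hu k j]
  rcases (hu i j).eq_or_lt with h0 | hpos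
  · simp [← h0]
  · exact mul_le_mul_of_nonneg_right (likeProb_le_of_pos hpos k) hpos.le

end ExAnteLike

section Probing

variable {M : OnlineMech} {n m : ℕ}

lemma sum_erase_marg_mul_congr (M : OnlineMech) {v w : Bids n m} {j : Fin m}
    (h : ∀ c k, k < j → v c k = w c k) {x : Fin m → ℝ} (hx : ∀ k, j < k → x k = 0)
    (c : Fin n) :
    ∑ k ∈ univ.erase j, marg M v k c * x k = ∑ k ∈ univ.erase j, marg M w k c * x k := by
  refine sum_congr rfl fun k hk => ?_
  rcases lt_or_gt_of_ne (ne_of_mem_erase hk) with hlt | hgt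
  · rw [marg_congr_of_eq_of_le M (fun a l hl => h a l (hl.trans_lt hlt))]
  · simp [hx k hgt]

lemma sum_erase_marg_setBid_mul (M : OnlineMech) {v : Bids n m} {a : Fin n} {j : Fin m}
    (hzero : ∀ k, j < k → v a k = 0) (t : ℝ) (c : Fin n) :
    ∑ k ∈ univ.erase j, marg M (setBid v a j t) k c * setBid v a j t a k
      = ∑ k ∈ univ.erase j, marg M v k c * v a k := by
  rw [sum_congr rfl fun k hk => by rw [setBid_apply_of_ne_right v a t (ne_of_mem_erase hk)]]
  exact sum_erase_marg_mul_congr M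
    (fun b k hk => setBid_apply_of_ne_right v a t hk.ne b) hzero c

lemma StrategyProof.marg_setBid_le (hsp : StrategyProof M) {v : Bids n m}
    (hv : ∀ c k, 0 ≤ v c k) {a : Fin n} {j : Fin m} (hzero : ∀ k, j < k → v a k = 0)
    (hpos : 0 < v a j) {t : ℝ} (ht : 0 ≤ t) :
    marg M (setBid v a j t) j a ≤ marg M v j a := by
  have sp := hsp n m v hv a (setBid v a j t a) (setBid_nonneg hv a j ht a)
  rw [setAgent_setBid_self, ← add_sum_erase _ _ (mem_univ j),
    ← add_sum_erase _ (fun k => marg M v k a * v a k) (mem_univ j),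
    sum_erase_marg_mul_congr M (fun b k hk => setBid_apply_of_ne_right v a t hk.ne b) hzero a]
    at sp
  exact le_of_mul_le_mul_right (by linarith) hpos

lemma StrategyProof.marg_setBid_eq (hsp : StrategyProof M) {v : Bids n m}
    (hv : ∀ c k, 0 ≤ v c k) {a : Fin n} {j : Fin m} (hzero : ∀ k, j < k → v a k = 0)
    (hpos : 0 < v a j) {t : ℝ} (ht : 0 < t) :
    marg M (setBid v a j t) j a = marg M v j a := by
  refine le_antisymm (hsp.marg_setBid_le hv hzero hpos ht.le) ?_
  have hzero' : ∀ k, j < k → setBid v a j t a k = 0 := fun k hk => by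
    rw [setBid_apply_of_ne_right v a t hk.ne', hzero k hk]
  have := hsp.marg_setBid_le (setBid_nonneg hv a j ht.le) hzero' (by simpa [setBid] using ht)
    (hv a j)
  rwa [setBid_setBid_self] at this

lemma EFA.marg_setBid_mul_le (hefa : EFA M) {v : Bids n m} (hv : ∀ c k, 0 ≤ v c k)
    {a : Fin n} {j : Fin m} (hzero : ∀ k, j < k → v a k = 0) {t : ℝ} (ht : 0 ≤ t)
    (b : Fin n) :
    marg M (setBid v a j t) j b * t ≤ marg M (setBid v a j t) j a * t
      + ∑ k ∈ univ.erase j, (marg M v k a - marg M v k b) * v a k := by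
  have efa := hefa n m _ (setBid_nonneg hv a j ht) a b
  rw [← add_sum_erase _ _ (mem_univ j), ← add_sum_erase _ (fun k => _ * _) (mem_univ j),
    sum_erase_marg_setBid_mul M hzero, sum_erase_marg_setBid_mul M hzero] at efa
  simp only [setBid, and_self, if_true] at efa
  simp only [sub_mul, sum_sub_distrib]
  linarith

end Probing

lemma inv_card_likeSet_le_marg {M : OnlineMech} (hnw : NonWasteful M) (hsp : StrategyProof M)
    (hefa : EFA M) {n m : ℕ} {v : Bids n m} (hv : ∀ c k, 0 ≤ v c k) {a : Fin n} {j : Fin m}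
    (hzero : ∀ k, j < k → v a k = 0) (ha : a ∈ likeSet v j) :
    ((likeSet v j).card : ℝ)⁻¹ ≤ marg M v j a := by
  set L := likeSet v j
  set p := marg M v j a
  have hpos : 0 < v a j := (mem_filter.mp ha).2
  have hcard : (1 : ℝ) ≤ L.card := by exact_mod_cast card_pos.mpr ⟨a, ha⟩
  have bound : ∀ t, 0 < t → (1 - L.card * p) * t
      ≤ ∑ b ∈ L.erase a, ∑ k ∈ univ.erase j, (marg M v k a - marg M v k b) * v a k := by
    intro t ht
    have hp : marg M (setBid v a j t) j a = p := hsp.marg_setBid_eq hv hzero hpos ht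
    have hrest : ∑ b ∈ L.erase a, marg M (setBid v a j t) j b = 1 - p := by
      have hone := hnw.sum_likeSet_marg_eq_one (v := setBid v a j t) (j := j)
        (by rw [likeSet_setBid_of_pos hpos ht]; exact ⟨a, ha⟩)
      rw [likeSet_setBid_of_pos hpos ht, ← add_sum_erase _ _ ha, hp] at hone
      linarith
    have hsum :=
      sum_le_sum fun b (_ : b ∈ L.erase a) => hefa.marg_setBid_mul_le hv hzero ht.le b
    rw [← sum_mul, hrest, sum_add_distrib, sum_const, card_erase_of_mem ha, nsmul_eq_mul,
      Nat.cast_sub (by exact_mod_cast hcard), hp] at hsum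
    linear_combination hsum
  rw [inv_le_iff_one_le_mul₀ (by linarith)]
  linarith [nonpos_of_forall_pos_mul_le bound]

def truncAfter {n m : ℕ} (u : Bids n m) (j : Fin m) : Bids n m :=
  fun c k => if k ≤ j then u c k else 0

lemma exAnteLike_of_strategyProof_of_efa {M : OnlineMech} (hnw : NonWasteful M)
    (hsp : StrategyProof M) (hefa : EFA M) : ExAnteLike M := by
  intro n m u hu i j
  set v := truncAfter u j
  have hv : ∀ c k, 0 ≤ v c k := fun c k => by unfold v truncAfter; split <;> simp [hu]
  have hzero : ∀ c k, j < k → v c k = 0 := fun c k hk => if_neg (not_le.mpr hk)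
  have hagree : ∀ c k, k ≤ j → u c k = v c k := fun c k hk => (if_pos hk).symm
  have hL : likeSet v j = likeSet u j := filter_congr fun c _ => by rw [hagree c j le_rfl]
  rw [marg_congr_of_eq_of_le M hagree, likeProb, ← hL]
  split_ifs with hi
  · have hle := fun c hc => inv_card_likeSet_le_marg hnw hsp hefa hv (hzero c) hc
    have heq : ∑ _c ∈ likeSet v j, ((likeSet v j).card : ℝ)⁻¹
        = ∑ c ∈ likeSet v j, marg M v j c := by
      rw [hnw.sum_likeSet_marg_eq_one ⟨i, hi⟩, sum_const, nsmul_eq_mul,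
        mul_inv_cancel₀ (by exact_mod_cast (card_pos.mpr ⟨i, hi⟩).ne')]
    exact ((sum_eq_sum_iff_of_le hle).mp heq i hi).symm
  · exact hnw.marg_eq_zero (by simpa [likeSet] using hi)

/-- A non-wasteful mechanism is strategy-proof and envy-free ex
ante iff it is ex ante equivalent to the Like mechanism. -/
theorem stmt3 (M : OnlineMech) (hnw : NonWasteful M) :
    (StrategyProof M ∧ EFA M) ↔ ExAnteLike M :=
  ⟨fun ⟨hsp, hefa⟩ => exAnteLike_of_strategyProof_of_efa hnw hsp hefa,
    fun h => ⟨h.strategyProof, h.efa⟩⟩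
end
end

section
/- A non-wasteful mechanism for online fair division is shared envy-free ex ante if and only if it is ex ante equivalent to the Like mechanism. -/
/-!
Online fair division with additive utilities (Aleksandrov & Walsh).

Agents are `Fin n`, items `Fin m` arriving in index order. A bid/utility
profile is `Bids n m`. An allocation assigns to each item an optional agent
(`none` = discarded). An online mechanism returns, for every instance, a
probability distribution over allocations, where the distribution over the
first `j` items depends only on the bids for the first `j` items.
-/

open Finset
open scoped Classical

noncomputable section

lemma marg_nonneg (M : OnlineMech) {n m : ℕ} (v : Bids n m) (j : Fin m) (i : Fin n) :
    0 ≤ marg M v j i :=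
  Finset.sum_nonneg fun π _ => M.nonneg n m v π

lemma marg_eq_of_prefix (M : OnlineMech) {n m : ℕ} (v w : Bids n m) (j : Fin m)
    (hag : ∀ (a : Fin n) (k : Fin m), k ≤ j → v a k = w a k) (i : Fin n) :
    marg M v j i = marg M w j i := by
  classical
  set P : Alloc n m → Alloc n m := fun π k => if k ≤ j then π k else none with hP
  set s : Finset (Alloc n m) := univ.filter (fun π => π j = some i) with hs
  have key : ∀ d : Alloc n m → ℝ,
      ∑ π ∈ s, d π = ∑ σ ∈ s.image P,
        ∑ π ∈ univ.filter (fun π : Alloc n m => ∀ k ≤ j, π k = σ k), d π := by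
    intro d
    rw [← Finset.sum_fiberwise_of_maps_to (fun x hx => Finset.mem_image_of_mem P hx) d]
    refine Finset.sum_congr rfl fun σ hσ => ?_
    obtain ⟨π₀, hπ₀, rfl⟩ := Finset.mem_image.1 hσ
    have hσnone : ∀ k : Fin m, ¬ k ≤ j → P π₀ k = none := by
      intro k hk; simp [hP, hk]
    have hσj : P π₀ j = some i := by
      have : π₀ j = some i := (Finset.mem_filter.1 hπ₀).2
      simp [hP, this]
    congr 1
    ext π
    simp only [hs, Finset.mem_filter, Finset.mem_univ, true_and]
    constructor
    · rintro ⟨h1, h2⟩ k hk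
      rw [← h2]; simp [hP, hk]
    · intro h1
      constructor
      · have := h1 j le_rfl
        rw [this, hσj]
      · funext k
        by_cases hk : k ≤ j
        · simpa [hP, hk] using h1 k hk
        · rw [hσnone k hk]; simp [hP, hk]
  show ∑ π ∈ s, M.d n m v π = ∑ π ∈ s, M.d n m w π
  rw [key, key]
  exact Finset.sum_congr rfl fun σ _ => M.online n m v w j (fun a k hk => hag a k hk) σ

lemma marg_eq_zero (M : OnlineMech) (hnw : NonWasteful M) {n m : ℕ} (v : Bids n m)
    (j : Fin m) (i : Fin n) (h : ¬ 0 < v i j) : marg M v j i = 0 := by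
  refine Finset.sum_eq_zero fun π hπ => ?_
  simp only [Finset.mem_filter] at hπ
  by_contra hne
  have hd : 0 < M.d n m v π := lt_of_le_of_ne (M.nonneg n m v π) (Ne.symm hne)
  exact h (((hnw n m v π hd j).2.2) i hπ.2)

lemma marg_sum_one (M : OnlineMech) (hnw : NonWasteful M) {n m : ℕ} (v : Bids n m)
    (j : Fin m) (hpos : ∃ i, 0 < v i j) : ∑ i, marg M v j i = 1 := by
  classical
  have h1 : ∑ o : Option (Fin n),
      ∑ π ∈ univ.filter (fun π : Alloc n m => π j = o), M.d n m v π = 1 := by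
    rw [Finset.sum_fiberwise univ (fun π : Alloc n m => π j) (M.d n m v)]
    exact M.total n m v
  rw [Fintype.sum_option] at h1
  have hnone : ∑ π ∈ univ.filter (fun π : Alloc n m => π j = none), M.d n m v π = 0 := by
    refine Finset.sum_eq_zero fun π hπ => ?_
    simp only [Finset.mem_filter] at hπ
    by_contra hne
    have hd : 0 < M.d n m v π := lt_of_le_of_ne (M.nonneg n m v π) (Ne.symm hne)
    exact ((hnw n m v π hd j).2.1 hpos) hπ.2
  rw [hnone, zero_add] at h1
  exact h1

lemma likeProb_eq_zero {n m : ℕ} (u : Bids n m) (j : Fin m) (i : Fin n)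
    (h : ¬ 0 < u i j) : likeProb u j i = 0 := by
  simp [likeProb, likeSet, h]

lemma like_term_eq {n m : ℕ} (u : Bids n m) (hu : ∀ i j, 0 ≤ u i j) (i k : Fin n)
    (h : Fin m) (hk : 0 < u k h) :
    likeProb u h k * u i h = likeProb u h i * u i h := by
  by_cases hi : 0 < u i h
  · have : likeProb u h k = likeProb u h i := by
      simp [likeProb, likeSet, hi, hk]
    rw [this]
  · have : u i h = 0 := le_antisymm (not_lt.1 hi) (hu i h)
    simp [this]

lemma exAnteLike_sefa_ineq {n m : ℕ} (u : Bids n m) (hu : ∀ i j, 0 ≤ u i j)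
    (i k : Fin n) :
    ∑ h, likeProb u h k * u i h
      = ∑ h ∈ univ.filter (fun h : Fin m => 0 < u k h), likeProb u h i * u i h := by
  rw [Finset.sum_filter]
  refine Finset.sum_congr rfl fun h _ => ?_
  by_cases hk : 0 < u k h
  · rw [if_pos hk]; exact like_term_eq u hu i k h hk
  · rw [if_neg hk, likeProb_eq_zero u h k hk, zero_mul]

lemma sefa_marg_eq_like (M : OnlineMech) (hnw : NonWasteful M) (hs : SEFA M)
    {n m : ℕ} (u : Bids n m) (hu : ∀ i j, 0 ≤ u i j) :
    ∀ N : ℕ, ∀ j : Fin m, (j : ℕ) = N → ∀ i, marg M u j i = likeProb u j i := by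
  intro N
  induction N using Nat.strong_induction_on with
  | _ N IH =>
    intro j hj i
    by_cases hL : ∃ a, 0 < u a j
    swap
    · push_neg at hL
      rw [marg_eq_zero M hnw u j i (hL i).not_gt, likeProb_eq_zero u j i (hL i).not_gt]
    -- nonempty like set; work in truncated instance w
    set w : Bids n m := fun a k => if k ≤ j then u a k else 0 with hwdef
    have hw : ∀ a k, 0 ≤ w a k := by
      intro a k; by_cases hk : k ≤ j <;> simp [hwdef, hk, hu a k]
    have hweq : ∀ (a : Fin n) (k : Fin m), k ≤ j → w a k = u a k := by
      intro a k hk; simp [hwdef, hk]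
    have hmw : ∀ h : Fin m, h ≤ j → ∀ b, marg M w h b = marg M u h b := by
      intro h hh b
      exact marg_eq_of_prefix M w u h (fun a k hk => hweq a k (hk.trans hh)) b
    have hlikew : ∀ h : Fin m, h ≤ j → ∀ b, likeProb w h b = likeProb u h b := by
      intro h hh b
      have : likeSet w h = likeSet u h := by
        unfold likeSet
        refine Finset.filter_congr fun a _ => ?_
        rw [hweq a h hh]
      simp [likeProb, this]
    have hprev : ∀ h : Fin m, h < j → ∀ b, marg M w h b = likeProb w h b := by
      intro h hh b
      rw [hmw h hh.le b, hlikew h hh.le b]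
      exact IH (h : ℕ) (by rw [← hj]; exact_mod_cast hh) h rfl b
    -- key claim: pairwise comparison of marginals among positive bidders
    have claim : ∀ a b : Fin n, 0 < u a j → 0 < u b j →
        marg M w j b ≤ marg M w j a := by
      intro a b ha hb
      have hSE := hs n m w hw a b
      have hwaj : w a j = u a j := hweq a j le_rfl
      have hwbj : w b j = u b j := hweq b j le_rfl
      have hjmem : j ∈ univ.filter (fun h : Fin m => 0 < w b h) := by
        simp [hwbj, hb]
      have hLHS : ∑ h, marg M w h b * w a h
          = marg M w j b * w a j + ∑ h ∈ univ.erase j, marg M w h b * w a h := by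
        exact (Finset.add_sum_erase univ (fun h => marg M w h b * w a h) (Finset.mem_univ j)).symm
      have hRHS : ∑ h ∈ univ.filter (fun h : Fin m => 0 < w b h), marg M w h a * w a h
          = marg M w j a * w a j
            + ∑ h ∈ (univ.filter (fun h : Fin m => 0 < w b h)).erase j,
                marg M w h a * w a h := by
        exact (Finset.add_sum_erase _ (fun h => marg M w h a * w a h) hjmem).symm
      have htail : ∑ h ∈ univ.erase j, marg M w h b * w a h
          = ∑ h ∈ (univ.filter (fun h : Fin m => 0 < w b h)).erase j,
              marg M w h a * w a h := by
        rw [← Finset.filter_erase, Finset.sum_filter]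
        refine Finset.sum_congr rfl fun h hh => ?_
        have hhne : h ≠ j := Finset.ne_of_mem_erase hh
        by_cases hbh : 0 < w b h
        · rw [if_pos hbh]
          have hhle : h ≤ j := by
            by_contra hc
            simp [hwdef, hc] at hbh
          have hhlt : h < j := lt_of_le_of_ne hhle hhne
          rw [hprev h hhlt b, hprev h hhlt a]
          exact like_term_eq w hw a b h hbh
        · rw [if_neg hbh, marg_eq_zero M hnw w h b hbh, zero_mul]
      rw [hLHS, hRHS, htail, add_le_add_iff_right] at hSE
      have hua : 0 < w a j := by rw [hwaj]; exact ha
      exact le_of_mul_le_mul_right hSE hua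
    have hmwj : ∀ b, marg M w j b = marg M u j b := hmw j le_rfl
    by_cases hi : 0 < u i j
    · -- i is a positive bidder: marginal equals 1/card
      have hcard : (likeSet u j).Nonempty := ⟨hL.choose, by
        simp [likeSet]; exact hL.choose_spec⟩
      have hsum : ∑ a, marg M u j a = 1 := marg_sum_one M hnw u j hL
      have hzero : ∀ a, a ∉ likeSet u j → marg M u j a = 0 := by
        intro a ha
        refine marg_eq_zero M hnw u j a ?_
        simpa [likeSet] using ha
      have heqall : ∀ a ∈ likeSet u j, marg M u j a = marg M u j i := by
        intro a ha
        have ha' : 0 < u a j := by simpa [likeSet] using ha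
        have h1 := claim i a hi ha'
        have h2 := claim a i ha' hi
        rw [hmwj a, hmwj i] at h1 h2
        exact le_antisymm h1 h2
      have hsum2 : ∑ a ∈ likeSet u j, marg M u j a = 1 := by
        rw [← hsum]
        exact Finset.sum_subset (Finset.subset_univ _)
          (fun a _ ha => hzero a ha)
      rw [Finset.sum_congr rfl heqall, Finset.sum_const, nsmul_eq_mul] at hsum2
      have hcardpos : (0 : ℝ) < (likeSet u j).card := by
        exact_mod_cast Finset.card_pos.2 hcard
      have : marg M u j i = ((likeSet u j).card : ℝ)⁻¹ := by
        field_simp at hsum2 ⊢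
        linarith [hsum2]
      rw [this, likeProb, if_pos (by simp [likeSet, hi])]
    · rw [marg_eq_zero M hnw u j i hi, likeProb_eq_zero u j i hi]

/-- A non-wasteful mechanism is shared envy-free ex ante iff it is
ex ante equivalent to the Like mechanism. -/
theorem stmt7 (M : OnlineMech) (hnw : NonWasteful M) :
    SEFA M ↔ ExAnteLike M := by
  constructor
  · intro hs n m u hu i j
    exact sefa_marg_eq_like M hnw hs u hu (j : ℕ) j rfl i
  · intro he n m u hu i k
    have h1 : ∀ (h : Fin m) (b : Fin n), marg M u h b = likeProb u h b :=
      fun h b => he n m u hu b h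
    calc ∑ h, marg M u h k * u i h = ∑ h, likeProb u h k * u i h := by
          exact Finset.sum_congr rfl fun h _ => by rw [h1 h k]
      _ = ∑ h ∈ univ.filter (fun h : Fin m => 0 < u k h), likeProb u h i * u i h :=
          exAnteLike_sefa_ineq u hu i k
      _ = ∑ h ∈ univ.filter (fun h : Fin m => 0 < u k h), marg M u h i * u i h := by
          exact Finset.sum_congr rfl fun h _ => by rw [h1 h i]
      _ ≤ ∑ h ∈ univ.filter (fun h : Fin m => 0 < u k h), marg M u h i * u i h := le_rfl

end
end

section
/- On the instance with two agents and two items where u_{11}=1, u_{12}=2, u_{21}=2, u_{22}=1, any mechanism that is envy-free ex ante on every prefix of the item sequence must give each item to each agent with probability 1/2, yielding each agent expected utility 3/2; this expected outcome is Pareto dominated by the allocation giving each agent the item they value at 2 (each gets utility 2). -/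
/-!
Online fair division with additive utilities (Aleksandrov & Walsh).

Agents are `Fin n`, items `Fin m` arriving in index order. A bid/utility
profile is `Bids n m`. An allocation assigns to each item an optional agent
(`none` = discarded). An online mechanism returns, for every instance, a
probability distribution over allocations, where the distribution over the
first `j` items depends only on the bids for the first `j` items.
-/

open Finset
open scoped Classical

noncomputable section

/-- On the instance with two agents and two items where
`u_{11}=1, u_{12}=2, u_{21}=2, u_{22}=1`, any mechanism that is envy-free ex
ante on every prefix must give each item to each agent with probability `1/2`,
yielding each agent expected utility `3/2`; this expected outcome is Pareto
dominated by the (random) allocation giving each agent the item they value at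
`2`. Here `p i j` is the probability that agent `i` receives item `j`. -/
theorem stmt13 (p : Fin 2 → Fin 2 → ℝ)
    (hnn : ∀ i j, 0 ≤ p i j) (htot : ∀ j, ∑ i, p i j = 1)
    (hef1 : p 1 0 * 1 ≤ p 0 0 * 1 ∧ p 0 0 * 2 ≤ p 1 0 * 2)
    (hef2 : p 1 0 * 1 + p 1 1 * 2 ≤ p 0 0 * 1 + p 0 1 * 2 ∧
            p 0 0 * 2 + p 0 1 * 1 ≤ p 1 0 * 2 + p 1 1 * 1) :
    (∀ i j, p i j = 1 / 2) ∧
    (p 0 0 * 1 + p 0 1 * 2 = 3 / 2 ∧ p 1 0 * 2 + p 1 1 * 1 = 3 / 2) ∧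
    (∃ q : Fin 2 → Fin 2 → ℝ,
      (∀ i j, 0 ≤ q i j) ∧ (∀ j, ∑ i, q i j = 1) ∧
      p 0 0 * 1 + p 0 1 * 2 < q 0 0 * 1 + q 0 1 * 2 ∧
      p 1 0 * 2 + p 1 1 * 1 < q 1 0 * 2 + q 1 1 * 1) := by
  have h0 := htot 0
  have h1 := htot 1
  simp [Fin.sum_univ_two] at h0 h1
  obtain ⟨a, b⟩ := hef1
  obtain ⟨c, d⟩ := hef2
  have e00 : p 0 0 = 1 / 2 := by linarith
  have e10 : p 1 0 = 1 / 2 := by linarith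
  have e01 : p 0 1 = 1 / 2 := by linarith
  have e11 : p 1 1 = 1 / 2 := by linarith
  refine ⟨?_, ⟨by linarith, by linarith⟩, ![![0, 1], ![1, 0]], ?_, ?_, by norm_num; linarith, by norm_num; linarith⟩
  · intro i j
    fin_cases i <;> fin_cases j <;> assumption
  · intro i j
    fin_cases i <;> fin_cases j <;> norm_num
  · intro j
    fin_cases j <;> simp [Fin.sum_univ_two]
end
end

section
/- The Online Random Priority mechanism and the Like mechanism are ex ante equivalent: on every instance, each agent receives each item with the same probability under both mechanisms; consequently Online Random Priority is envy-free ex ante. -/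
/-!
Online fair division with additive utilities (Aleksandrov & Walsh).

Agents are `Fin n`, items `Fin m` arriving in index order. A bid/utility
profile is `Bids n m`. An allocation assigns to each item an optional agent
(`none` = discarded). An online mechanism returns, for every instance, a
probability distribution over allocations, where the distribution over the
first `j` items depends only on the bids for the first `j` items.
-/

open Finset
open scoped Classical

noncomputable section

/-- Probability that agent `i` receives item `j` under Online Random Priority:
the fraction of the `n!` priority orders whose Online Serial Dictator run
gives `j` to `i`. -/
noncomputable def orpMarg {n m : ℕ} (u : Bids n m) (j : Fin m) (i : Fin n) : ℝ :=
  ((univ.filter (fun σ : Equiv.Perm (Fin n) => osdAlloc σ u j = some i)).card : ℝ)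
    / (Nat.factorial n : ℝ)

lemma winner_mem {n m : ℕ} (σ : Equiv.Perm (Fin n)) (u : Bids n m) (j : Fin m) (i : Fin n)
    (h : osdAlloc σ u j = some i) : i ∈ likeSet u j := by
  unfold osdAlloc at h
  split at h
  · rename_i hs
    obtain ⟨w, hw, hwe⟩ := Finset.mem_image.mp (Finset.min'_mem _ (hs.image σ))
    have : σ.symm (((likeSet u j).image σ).min' (hs.image σ)) = w := by
      rw [← hwe]; simp
    rw [Option.some_inj] at h
    rw [← h, this]; exact hw
  · simp at h

lemma swap_closed {n m : ℕ} (u : Bids n m) (j : Fin m) (i k : Fin n)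
    (hi : i ∈ likeSet u j) (hk : k ∈ likeSet u j) :
    ∀ x ∈ likeSet u j, Equiv.swap i k x ∈ likeSet u j := by
  intro x hx
  rcases eq_or_ne x i with rfl | hxi
  · rw [Equiv.swap_apply_left]; exact hk
  rcases eq_or_ne x k with rfl | hxk
  · rw [Equiv.swap_apply_right]; exact hi
  · rw [Equiv.swap_apply_of_ne_of_ne hxi hxk]; exact hx

lemma image_swap {n m : ℕ} (u : Bids n m) (j : Fin m) (i k : Fin n)
    (hi : i ∈ likeSet u j) (hk : k ∈ likeSet u j) :
    (likeSet u j).image (Equiv.swap i k) = likeSet u j := by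
  apply Finset.Subset.antisymm
  · intro x hx
    obtain ⟨a, ha, rfl⟩ := Finset.mem_image.mp hx
    exact swap_closed u j i k hi hk a ha
  · intro x hx
    exact Finset.mem_image.mpr ⟨Equiv.swap i k x, swap_closed u j i k hi hk x hx,
      Equiv.swap_apply_self i k x⟩

lemma swap_wins {n m : ℕ} (u : Bids n m) (j : Fin m) (i k : Fin n)
    (hi : i ∈ likeSet u j) (hk : k ∈ likeSet u j) (σ : Equiv.Perm (Fin n)) :
    osdAlloc (σ * Equiv.swap i k) u j = some k ↔ osdAlloc σ u j = some i := by
  have hS : (likeSet u j).Nonempty := ⟨i, hi⟩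
  have himg : (likeSet u j).image (⇑(σ * Equiv.swap i k)) = (likeSet u j).image σ := by
    have : (likeSet u j).image (⇑(σ * Equiv.swap i k))
        = ((likeSet u j).image (Equiv.swap i k)).image σ := by
      rw [Finset.image_image]; rfl
    rw [this, image_swap u j i k hi hk]
  unfold osdAlloc
  rw [dif_pos hS, dif_pos hS]
  have hmin : ((likeSet u j).image (⇑(σ * Equiv.swap i k))).min' (hS.image _)
      = ((likeSet u j).image σ).min' (hS.image σ) := by
    congr 1
  rw [hmin]
  set w := ((likeSet u j).image σ).min' (hS.image σ)
  have hsymm : (σ * Equiv.swap i k).symm w = Equiv.swap i k (σ.symm w) := by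
    simp [Equiv.Perm.mul_def, Equiv.symm_trans_apply]
  rw [hsymm]
  constructor
  · intro h
    rw [Option.some_inj] at h ⊢
    have := congrArg (Equiv.swap i k) h
    rw [Equiv.swap_apply_self, Equiv.swap_apply_right] at this
    exact this
  · intro h
    rw [Option.some_inj] at h ⊢
    rw [h, Equiv.swap_apply_left]

lemma card_wins_eq {n m : ℕ} (u : Bids n m) (j : Fin m) (i k : Fin n)
    (hi : i ∈ likeSet u j) (hk : k ∈ likeSet u j) :
    (univ.filter (fun σ : Equiv.Perm (Fin n) => osdAlloc σ u j = some i)).card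
    = (univ.filter (fun σ : Equiv.Perm (Fin n) => osdAlloc σ u j = some k)).card := by
  apply Finset.card_bij' (fun σ _ => σ * Equiv.swap i k) (fun σ _ => σ * Equiv.swap i k)
  · intro σ hσ
    simp only [Finset.mem_filter, Finset.mem_univ, true_and] at hσ ⊢
    exact (swap_wins u j i k hi hk σ).mpr hσ
  · intro σ hσ
    simp only [Finset.mem_filter, Finset.mem_univ, true_and] at hσ ⊢
    have := (swap_wins u j i k hi hk (σ * Equiv.swap i k))
    rw [mul_assoc, Equiv.swap_mul_self, mul_one] at this
    exact this.mp hσ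
  · intro σ _; rw [mul_assoc, Equiv.swap_mul_self, mul_one]
  · intro σ _; rw [mul_assoc, Equiv.swap_mul_self, mul_one]

lemma sum_card_wins {n m : ℕ} (u : Bids n m) (j : Fin m) (hS : (likeSet u j).Nonempty) :
    ∑ a ∈ likeSet u j,
      (univ.filter (fun σ : Equiv.Perm (Fin n) => osdAlloc σ u j = some a)).card
    = Nat.factorial n := by
  have key : ∀ σ : Equiv.Perm (Fin n), ∃ w ∈ likeSet u j, osdAlloc σ u j = some w := by
    intro σ
    unfold osdAlloc
    rw [dif_pos hS]
    refine ⟨_, ?_, rfl⟩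
    exact winner_mem σ u j _ (by unfold osdAlloc; rw [dif_pos hS])
  calc ∑ a ∈ likeSet u j,
        (univ.filter (fun σ : Equiv.Perm (Fin n) => osdAlloc σ u j = some a)).card
      = ∑ a ∈ likeSet u j, ∑ σ : Equiv.Perm (Fin n),
          if osdAlloc σ u j = some a then 1 else 0 := by
        refine Finset.sum_congr rfl fun a _ => ?_
        rw [Finset.card_filter]
    _ = ∑ σ : Equiv.Perm (Fin n), ∑ a ∈ likeSet u j,
          if osdAlloc σ u j = some a then 1 else 0 := Finset.sum_comm
    _ = ∑ _σ : Equiv.Perm (Fin n), 1 := by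
        refine Finset.sum_congr rfl fun σ _ => ?_
        obtain ⟨w, hw, hwin⟩ := key σ
        have hst : ∀ a ∈ likeSet u j,
            (if osdAlloc σ u j = some a then (1:ℕ) else 0) = if a = w then 1 else 0 := by
          intro a _; rw [hwin]; simp [eq_comm]
        rw [Finset.sum_congr rfl hst,
          Finset.sum_ite_eq' (likeSet u j) w (fun _ => (1:ℕ)), if_pos hw]
    _ = Nat.factorial n := by
        rw [Finset.sum_const, smul_eq_mul, mul_one, Finset.card_univ, Fintype.card_perm,
          Fintype.card_fin]

lemma orp_eq_like {n m : ℕ} (u : Bids n m) (j : Fin m) (i : Fin n) :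
    orpMarg u j i = likeProb u j i := by
  by_cases hi : i ∈ likeSet u j
  · have hS : (likeSet u j).Nonempty := ⟨i, hi⟩
    set c := (univ.filter (fun σ : Equiv.Perm (Fin n) => osdAlloc σ u j = some i)).card with hc
    have hsum : (likeSet u j).card * c = Nat.factorial n := by
      rw [← sum_card_wins u j hS]
      rw [Finset.sum_congr rfl (fun a ha => (card_wins_eq u j a i ha hi))]
      rw [Finset.sum_const, smul_eq_mul]
    have hfac : (0:ℝ) < (Nat.factorial n : ℝ) := by
      exact_mod_cast Nat.factorial_pos n
    have hcard : (0:ℝ) < ((likeSet u j).card : ℝ) := by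
      exact_mod_cast Finset.card_pos.mpr hS
    have hc0 : (0:ℝ) < (c : ℝ) := by
      have : c ≠ 0 := by
        intro h0
        rw [h0, Nat.mul_zero] at hsum
        exact (Nat.factorial_pos n).ne' hsum.symm
      exact_mod_cast Nat.pos_of_ne_zero this
    have hsumR : ((likeSet u j).card : ℝ) * (c : ℝ) = (Nat.factorial n : ℝ) := by
      exact_mod_cast hsum
    unfold orpMarg likeProb
    rw [if_pos hi, ← hc, ← hsumR]
    field_simp
  · have hempty : (univ.filter
        (fun σ : Equiv.Perm (Fin n) => osdAlloc σ u j = some i)) = ∅ := by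
      apply Finset.filter_false_of_mem
      intro σ _ h
      exact hi (winner_mem σ u j i h)
    unfold orpMarg likeProb
    rw [if_neg hi, hempty]
    simp

/-- Online Random Priority and Like are ex ante equivalent: on
every instance each agent receives each item with the same probability under
both; consequently Online Random Priority is envy-free ex ante. -/
theorem stmt14 (n m : ℕ) (u : Bids n m) (hu : ∀ i j, 0 ≤ u i j) :
    (∀ (j : Fin m) (i : Fin n), orpMarg u j i = likeProb u j i) ∧
    (∀ i k : Fin n, ∑ h, orpMarg u h k * u i h ≤ ∑ h, orpMarg u h i * u i h) := by
  refine ⟨fun j i => orp_eq_like u j i, fun i k => ?_⟩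
  simp only [orp_eq_like]
  apply Finset.sum_le_sum
  intro h _
  rcases (hu i h).eq_or_lt with h0 | hpos
  · rw [← h0, mul_zero, mul_zero]
  · apply mul_le_mul_of_nonneg_right _ (hu i h)
    have hil : i ∈ likeSet u h := Finset.mem_filter.mpr ⟨Finset.mem_univ i, hpos⟩
    unfold likeProb
    rw [if_pos hil]
    split
    · exact le_refl _
    · positivity
end
end

section
/- With 0/1 cardinal utilities, every non-wasteful mechanism that returns (with positive probability) only allocations that the Balanced Like mechanism can return is bounded envy-free ex post with 1: in every returned allocation, for all agents i,k, u_i(π) + 1 ≥ u_{ik}(π). -/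
/-!
Online fair division with additive utilities (Aleksandrov & Walsh).

Agents are `Fin n`, items `Fin m` arriving in index order. A bid/utility
profile is `Bids n m`. An allocation assigns to each item an optional agent
(`none` = discarded). An online mechanism returns, for every instance, a
probability distribution over allocations, where the distribution over the
first `j` items depends only on the bids for the first `j` items.
-/

open Finset
open scoped Classical

noncomputable section

/-- With 0/1 utilities, every non-wasteful mechanism that returns
(with positive probability) only allocations that the Balanced Like mechanism
can return is bounded envy-free ex post with 1: in every returned allocation,
for all agents `i, k`, `u_{ik}(π) ≤ u_{ii}(π) + 1`. -/
theorem stmt15 (M : OnlineMech) (hnw : NonWasteful M)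
    (hsub : ∀ (n m : ℕ) (u : Bids n m), (∀ i j, u i j = 0 ∨ u i j = 1) →
      ∀ π : Alloc n m, 0 < M.d n m u π → 0 < blDist u π) :
    ∀ (n m : ℕ) (u : Bids n m), (∀ i j, u i j = 0 ∨ u i j = 1) →
      ∀ π : Alloc n m, 0 < M.d n m u π →
        ∀ i k : Fin n, util u i k π ≤ util u i i π + 1 := by
  intro n m u hu π hpos i k
  have hbl : 0 < blDist u π := hsub n m u hu π hpos
  have hfeas : ∀ j : Fin m, ∀ a, π j = some a → a ∈ blFeasSet u π j := by
    intro j a hja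
    by_contra hmem
    have hz : blDist u π = 0 := by
      rw [blDist]
      apply Finset.prod_eq_zero (Finset.mem_univ j)
      simp only [hja]
      simp [hmem]
    exact absurd hz hbl.ne'
  have key : ∀ a : Fin n, util u i a π
      = ((univ.filter (fun j : Fin m => π j = some a ∧ u i j = 1)).card : ℝ) := by
    intro a
    rw [util, Finset.card_filter]
    push_cast
    rw [Finset.sum_filter]
    apply Finset.sum_congr rfl
    intro j _
    rcases hu i j with h | h <;> by_cases hπ : π j = some a <;> simp [h, hπ]
  set S : Finset (Fin m) := univ.filter (fun j : Fin m => π j = some k ∧ u i j = 1) with hS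
  rcases S.eq_empty_or_nonempty with hE | hNE
  · rw [key k, key i, hS.symm, hE]
    simp only [Finset.card_empty, Nat.cast_zero]
    positivity
  · set j₀ : Fin m := S.max' hNE with hj₀
    have hj₀S : j₀ ∈ S := S.max'_mem hNE
    have hj₀π : π j₀ = some k := (Finset.mem_filter.mp hj₀S).2.1
    have hj₀u : u i j₀ = 1 := (Finset.mem_filter.mp hj₀S).2.2
    have hsub1 : S ⊆ insert j₀ (univ.filter (fun h : Fin m => h < j₀ ∧ π h = some k)) := by
      intro j hj
      rcases eq_or_ne j j₀ with rfl | hne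
      · exact Finset.mem_insert_self _ _
      · apply Finset.mem_insert_of_mem
        refine Finset.mem_filter.mpr ⟨Finset.mem_univ _, ?_, (Finset.mem_filter.mp hj).2.1⟩
        exact lt_of_le_of_ne (S.le_max' j hj) hne
    have hcard1 : S.card ≤ countBefore π k j₀ + 1 := by
      have h1 : S.card ≤ (insert j₀ (univ.filter (fun h : Fin m => h < j₀ ∧ π h = some k))).card :=
        Finset.card_le_card hsub1
      have h2 := Finset.card_insert_le j₀ (univ.filter (fun h : Fin m => h < j₀ ∧ π h = some k))
      rw [countBefore]
      omega
    have hkfeas := Finset.mem_filter.mp (hfeas j₀ k hj₀π)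
    have hiu : 0 < u i j₀ := by rw [hj₀u]; norm_num
    have hcb : countBefore π k j₀ ≤ countBefore π i j₀ := hkfeas.2.2 i hiu
    have hsub2 : univ.filter (fun h : Fin m => h < j₀ ∧ π h = some i)
        ⊆ univ.filter (fun j : Fin m => π j = some i ∧ u i j = 1) := by
      intro j hj
      have hji : π j = some i := (Finset.mem_filter.mp hj).2.2
      have hpos' : 0 < u i j := (Finset.mem_filter.mp (hfeas j i hji)).2.1
      have hui : u i j = 1 := by
        rcases hu i j with h | h
        · exact absurd h hpos'.ne'
        · exact h
      exact Finset.mem_filter.mpr ⟨Finset.mem_univ _, hji, hui⟩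
    have hcard2 : countBefore π i j₀
        ≤ (univ.filter (fun j : Fin m => π j = some i ∧ u i j = 1)).card :=
      Finset.card_le_card hsub2
    rw [key k, key i, hS.symm]
    have hfin : S.card ≤ (univ.filter (fun j : Fin m => π j = some i ∧ u i j = 1)).card + 1 := by
      simp only [countBefore] at hcard1 hcb hcard2
      omega
    exact_mod_cast hfin

end
end

section
/- With identical cardinal utilities (all agents share the same utility u_j > 0 for each item o_j), the Balanced Like mechanism is ex ante equivalent to the Like mechanism, and both are Pareto efficient ex ante and ex post. -/
/-!
Online fair division with additive utilities (Aleksandrov & Walsh).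

Agents are `Fin n`, items `Fin m` arriving in index order. A bid/utility
profile is `Bids n m`. An allocation assigns to each item an optional agent
(`none` = discarded). An online mechanism returns, for every instance, a
probability distribution over allocations, where the distribution over the
first `j` items depends only on the bids for the first `j` items.
-/

open Finset
open scoped Classical

noncomputable section

/-!
Both mechanisms give item `j` uniformly at random to a feasible set of agents that depends only
on the earlier items, so their laws are products of conditional laws and sum to one. With
identical utilities these feasible sets are equivariant under relabelling the agents, so both
laws are invariant under agent permutations; as every item is allocated, each agent receives
each item with probability `1/n`.

With identical utilities the utilitarian welfare of an allocation is the total value of the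
allocated items, so an allocation discarding only items nobody likes maximizes welfare and is
Pareto efficient. Ex ante, a feasible fractional assignment gives at most the full value of each
item, which the uniform marginals attain.
-/

lemma sum_prod_eq_one_of_causal {α : Type*} [Fintype α] [Nonempty α] :
    ∀ {m : ℕ} (f : Fin m → (Fin m → α) → ℝ),
      (∀ j π π', (∀ k ≤ j, π k = π' k) → f j π = f j π') →
      (∀ j π, ∑ a, f j (Function.update π j a) = 1) →
      ∑ π : Fin m → α, ∏ j, f j π = 1
  | 0, f, _, _ => by simp
  | m + 1, f, hcausal, hsum => by
    obtain ⟨a₀⟩ := ‹Nonempty α›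
    have hinit : ∀ (j : Fin m) (p q : Fin (m + 1) → α),
        (∀ k ≤ j, p k.castSucc = q k.castSucc) → f j.castSucc p = f j.castSucc q := by
      refine fun j p q h => hcausal _ _ _ fun k hk => ?_
      obtain ⟨k, rfl⟩ := Fin.exists_castSucc_eq.mpr ((Fin.castSucc_lt_last j).trans_le' hk).ne
      exact h k (Fin.castSucc_le_castSucc_iff.mp hk)
    set g : Fin m → (Fin m → α) → ℝ := fun j π => f j.castSucc (Fin.snoc π a₀)
    have hg : ∑ π : Fin m → α, ∏ j, g j π = 1 := by
      refine sum_prod_eq_one_of_causal g (fun j π π' h => hinit _ _ _ ?_) (fun j π => ?_)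
      · simpa using h
      · simp only [g, Fin.snoc_update]
        exact hsum _ _
    have hlast : ∀ π : Fin m → α, ∑ a, f (Fin.last m) (Fin.snoc π a) = 1 := fun π => by
      simpa only [Fin.update_snoc_last] using hsum (Fin.last m) (Fin.snoc π a₀)
    calc ∑ π : Fin (m + 1) → α, ∏ j, f j π
        = ∑ π : Fin m → α, ∑ a, (∏ j, g j π) * f (Fin.last m) (Fin.snoc π a) := by
          rw [← (Fin.snocEquiv fun _ => α).sum_comp, Fintype.sum_prod_type, sum_comm]
          refine sum_congr rfl fun π _ => sum_congr rfl fun a _ => ?_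
          change ∏ j, f j (Fin.snoc π a) = _
          rw [Fin.prod_univ_castSucc]
          congr 1
          exact prod_congr rfl fun j _ => hinit _ _ _ (by simp)
      _ = 1 := by simp_rw [← mul_sum, hlast, mul_one, hg]

namespace Alloc

variable {n m : ℕ}

def relabel (σ : Equiv.Perm (Fin n)) : Equiv.Perm (Alloc n m) :=
  Equiv.piCongrRight fun _ => σ.optionCongr

@[simp]
lemma relabel_apply (σ : Equiv.Perm (Fin n)) (π : Alloc n m) (j : Fin m) :
    relabel σ π j = (π j).map σ :=
  rfl

lemma relabel_apply_eq_some (σ : Equiv.Perm (Fin n)) (π : Alloc n m) (j : Fin m) (a : Fin n) :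
    relabel σ π j = some (σ a) ↔ π j = some a := by
  simp [Option.map_eq_some_iff, σ.injective.eq_iff]

end Alloc

open Alloc

section Marginals

variable {n m : ℕ}

lemma genMarg_relabel (d : Alloc n m → ℝ) (σ : Equiv.Perm (Fin n))
    (hd : ∀ π, d (relabel σ π) = d π) (j : Fin m) (i : Fin n) :
    genMarg d j (σ i) = genMarg d j i := by
  simp only [genMarg, sum_filter]
  rw [← Equiv.sum_comp (relabel σ)]
  simp only [relabel_apply_eq_some, hd]

lemma sum_genMarg_of_complete (d : Alloc n m → ℝ) (hd : ∀ π, d π ≠ 0 → ∀ j, π j ≠ none)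
    (j : Fin m) : ∑ i, genMarg d j i = ∑ π, d π := by
  simp only [genMarg, sum_filter]
  rw [sum_comm]
  refine sum_congr rfl fun π _ => ?_
  cases hπ : π j with
  | none => simpa using (not_imp_comm.mp (hd π) (· j hπ)).symm
  | some a => simp

lemma genMarg_eq_inv_of_relabel_invariant (d : Alloc n m → ℝ) (hsum : ∑ π, d π = 1)
    (hd : ∀ π, d π ≠ 0 → ∀ j, π j ≠ none)
    (hrel : ∀ (σ : Equiv.Perm (Fin n)) π, d (relabel σ π) = d π) (j : Fin m) (i : Fin n) :
    genMarg d j i = (n : ℝ)⁻¹ := by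
  have hall : ∀ a, genMarg d j a = genMarg d j i := fun a => by
    simpa using genMarg_relabel d (Equiv.swap i a) (hrel _) j i
  have hn : (n : ℝ) * genMarg d j i = 1 := by
    simpa [hall, hsum] using sum_genMarg_of_complete d hd j
  exact eq_inv_of_mul_eq_one_right hn

end Marginals

section SeqUniform

variable {n m : ℕ}

def roundProb (u : Bids n m) (j : Fin m) (S : Finset (Fin n)) : Option (Fin n) → ℝ
  | none => if ∀ i, ¬ 0 < u i j then 1 else 0
  | some i => if i ∈ S then (S.card : ℝ)⁻¹ else 0

/-- Like (`F π j = likeSet u j`) and Balanced Like (`F = blFeasSet u`) are of this form. -/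
def seqUniformDist (u : Bids n m) (F : Alloc n m → Fin m → Finset (Fin n)) (π : Alloc n m) : ℝ :=
  ∏ j, roundProb u j (F π j) (π j)

lemma blDist_eq_seqUniformDist (u : Bids n m) : blDist u = seqUniformDist u (blFeasSet u) :=
  rfl

lemma likeDist_eq_seqUniformDist (u : Bids n m) :
    likeDist u = seqUniformDist u fun _ => likeSet u :=
  rfl

lemma sum_roundProb (u : Bids n m) (j : Fin m) (S : Finset (Fin n))
    (hS : S.Nonempty ↔ ∃ i, 0 < u i j) : ∑ c, roundProb u j S c = 1 := by
  by_cases hj : ∃ i, 0 < u i j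
  · have hcard : (S.card : ℝ) ≠ 0 := by simpa using (hS.mpr hj).ne_empty
    simp [Fintype.sum_option, roundProb, hj, sum_ite_mem, hcard]
  · simp_all [Fintype.sum_option, roundProb, Finset.not_nonempty_iff_eq_empty]

lemma roundProb_relabel (u : Bids n m) (j : Fin m) (S : Finset (Fin n)) (σ : Equiv.Perm (Fin n))
    (c : Option (Fin n)) : roundProb u j (S.map σ.toEmbedding) (c.map σ) = roundProb u j S c := by
  cases c <;> simp [roundProb]

lemma sum_seqUniformDist (u : Bids n m) (F : Alloc n m → Fin m → Finset (Fin n))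
    (hF : ∀ π π' j, (∀ k < j, π k = π' k) → F π j = F π' j)
    (hne : ∀ π j, (F π j).Nonempty ↔ ∃ i, 0 < u i j) :
    ∑ π, seqUniformDist u F π = 1 := by
  refine sum_prod_eq_one_of_causal _ (fun j π π' h => ?_) (fun j π => ?_)
  · rw [hF π π' j fun k hk => h k hk.le, h j le_rfl]
  · simp only [Function.update_self, hF (Function.update π j _) π j
      fun k hk => Function.update_of_ne hk.ne _ _]
    exact sum_roundProb u j _ (hne π j)

lemma seqUniformDist_relabel (u : Bids n m) (F : Alloc n m → Fin m → Finset (Fin n))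
    (σ : Equiv.Perm (Fin n)) (hF : ∀ π j, F (relabel σ π) j = (F π j).map σ.toEmbedding)
    (π : Alloc n m) : seqUniformDist u F (relabel σ π) = seqUniformDist u F π := by
  simp only [seqUniformDist, hF, relabel_apply, roundProb_relabel]

lemma no_bids_of_seqUniformDist_ne_zero (u : Bids n m) (F : Alloc n m → Fin m → Finset (Fin n))
    {π : Alloc n m} (hπ : seqUniformDist u F π ≠ 0) {j : Fin m} (hj : π j = none) :
    ∀ i, ¬ 0 < u i j := by
  intro i hi
  refine hπ (prod_eq_zero (mem_univ j) ?_)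
  simp only [hj, roundProb]
  exact if_neg fun h => h i hi

end SeqUniform

section BalancedLike

variable {n m : ℕ}

lemma countBefore_congr {π π' : Alloc n m} {j : Fin m} (h : ∀ k < j, π k = π' k) (a : Fin n) :
    countBefore π a j = countBefore π' a j := by
  unfold countBefore
  congr 1
  exact filter_congr fun k _ => and_congr_right fun hk => by rw [h k hk]

lemma blFeasSet_congr (u : Bids n m) {π π' : Alloc n m} {j : Fin m}
    (h : ∀ k < j, π k = π' k) : blFeasSet u π j = blFeasSet u π' j := by
  simp only [blFeasSet, countBefore_congr h]

lemma blFeasSet_nonempty_iff (u : Bids n m) (π : Alloc n m) (j : Fin m) :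
    (blFeasSet u π j).Nonempty ↔ ∃ i, 0 < u i j := by
  refine ⟨fun ⟨a, ha⟩ => ⟨a, (mem_filter.mp ha).2.1⟩, fun ⟨i, hi⟩ => ?_⟩
  obtain ⟨a, ha, hmin⟩ := (likeSet u j).exists_min_image (countBefore π · j)
    ⟨i, mem_filter.mpr ⟨mem_univ i, hi⟩⟩
  simp only [likeSet, mem_filter, mem_univ, true_and] at ha hmin
  exact ⟨a, mem_filter.mpr ⟨mem_univ a, ha, hmin⟩⟩

lemma countBefore_relabel (σ : Equiv.Perm (Fin n)) (π : Alloc n m) (a : Fin n) (j : Fin m) :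
    countBefore (relabel σ π) (σ a) j = countBefore π a j := by
  simp only [countBefore, relabel_apply_eq_some]

lemma blFeasSet_relabel {u : Bids n m} {σ : Equiv.Perm (Fin n)}
    (hσ : ∀ a j, u (σ a) j = u a j) (π : Alloc n m) (j : Fin m) :
    blFeasSet u (relabel σ π) j = (blFeasSet u π j).map σ.toEmbedding := by
  ext a
  obtain ⟨a, rfl⟩ := σ.surjective a
  simp only [blFeasSet, mem_map_equiv, mem_filter, mem_univ, true_and, hσ,
    Equiv.symm_apply_apply]
  rw [← σ.forall_congr_right]
  simp only [hσ, countBefore_relabel]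

lemma likeSet_map {u : Bids n m} {σ : Equiv.Perm (Fin n)} (hσ : ∀ a j, u (σ a) j = u a j)
    (j : Fin m) : (likeSet u j).map σ.toEmbedding = likeSet u j := by
  ext a
  obtain ⟨a, rfl⟩ := σ.surjective a
  simp [likeSet, hσ]

end BalancedLike

section Identical

variable {n m : ℕ}

lemma genMarg_seqUniformDist_eq_inv {u : Bids n m} (hlike : ∀ j, ∃ a, 0 < u a j)
    {F : Alloc n m → Fin m → Finset (Fin n)}
    (hF : ∀ π π' j, (∀ k < j, π k = π' k) → F π j = F π' j)
    (hne : ∀ π j, (F π j).Nonempty ↔ ∃ i, 0 < u i j)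
    (hrel : ∀ σ π j, F (relabel σ π) j = (F π j).map (Equiv.toEmbedding σ))
    (j : Fin m) (i : Fin n) : genMarg (seqUniformDist u F) j i = (n : ℝ)⁻¹ :=
  genMarg_eq_inv_of_relabel_invariant _ (sum_seqUniformDist u F hF hne)
    (fun _ hπ k hk => (hlike k).elim (no_bids_of_seqUniformDist_ne_zero u F hπ hk))
    (fun σ => seqUniformDist_relabel u F σ (hrel σ)) j i

lemma genMarg_blDist {u : Bids n m} (hpos : ∀ i j, 0 < u i j) (hsymm : ∀ a b j, u a j = u b j)
    (j : Fin m) (i : Fin n) : genMarg (blDist u) j i = (n : ℝ)⁻¹ := by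
  rw [blDist_eq_seqUniformDist]
  exact genMarg_seqUniformDist_eq_inv (fun _ => ⟨i, hpos i _⟩) (fun _ _ _ => blFeasSet_congr u)
    (blFeasSet_nonempty_iff u)
    (fun σ => blFeasSet_relabel fun a => hsymm (σ a) a) j i

lemma genMarg_likeDist {u : Bids n m} (hpos : ∀ i j, 0 < u i j) (hsymm : ∀ a b j, u a j = u b j)
    (j : Fin m) (i : Fin n) : genMarg (likeDist u) j i = (n : ℝ)⁻¹ := by
  rw [likeDist_eq_seqUniformDist]
  exact genMarg_seqUniformDist_eq_inv (fun _ => ⟨i, hpos i _⟩) (fun _ _ _ _ => rfl)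
    (fun _ j => by simp [likeSet, filter_nonempty_iff])
    (fun σ _ j => (likeSet_map (fun a => hsymm (σ a) a) j).symm) j i

end Identical

section Efficiency

variable {n m : ℕ}

def welfare (u : Bids n m) (π : Alloc n m) : ℝ :=
  ∑ i, util u i i π

lemma welfare_eq_sum (u : Bids n m) (π : Alloc n m) :
    welfare u π = ∑ j, (π j).elim 0 (u · j) := by
  simp only [welfare, util, sum_filter]
  rw [sum_comm]
  refine sum_congr rfl fun j _ => ?_
  cases π j <;> simp

lemma paretoEff_of_welfare_max {u : Bids n m} {π : Alloc n m}
    (h : ∀ π', welfare u π' ≤ welfare u π) : ParetoEff u π := by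
  rintro ⟨π', hle, i, hlt⟩
  exact (h π').not_gt (sum_lt_sum (fun i _ => hle i) ⟨i, mem_univ i, hlt⟩)

lemma welfare_le_of_identical {w : Fin m → ℝ} {u : Bids n m} (hu : ∀ i j, u i j = w j)
    (hw : ∀ j, 0 ≤ w j) {π : Alloc n m} (hπ : ∀ j, π j = none → ∀ i, ¬ 0 < u i j)
    (π' : Alloc n m) : welfare u π' ≤ welfare u π := by
  rw [welfare_eq_sum, welfare_eq_sum]
  refine sum_le_sum fun j _ => ?_
  cases h : π j with
  | none =>
    cases h' : π' j with
    | none => simp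
    | some b => simpa using hπ j h b
  | some a => cases π' j <;> simp [hu, hw]

lemma paretoEff_of_seqUniformDist_pos {w : Fin m → ℝ} {u : Bids n m} (hu : ∀ i j, u i j = w j)
    (hw : ∀ j, 0 ≤ w j) {F : Alloc n m → Fin m → Finset (Fin n)} {π : Alloc n m}
    (hπ : 0 < seqUniformDist u F π) : ParetoEff u π :=
  paretoEff_of_welfare_max <|
    welfare_le_of_identical hu hw fun _ => no_bids_of_seqUniformDist_ne_zero u F hπ.ne'

lemma margPEA_of_forall_le {u : Bids n m} {f : Fin m → Fin n → ℝ}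
    (h : ∀ q : Fin n → Fin m → ℝ, (∀ i j, 0 ≤ q i j) → (∀ j, ∑ i, q i j ≤ 1) →
      ∑ i, ∑ j, q i j * u i j ≤ ∑ i, ∑ j, f j i * u i j) : margPEA u f := by
  rintro ⟨q, hq0, hq1, hle, i, hlt⟩
  exact (h q hq0 hq1).not_gt (sum_lt_sum (fun i _ => hle i) ⟨i, mem_univ i, hlt⟩)

lemma margPEA_of_identical_of_uniform {w : Fin m → ℝ} {u : Bids n m} (hu : ∀ i j, u i j = w j)
    (hw : ∀ j, 0 ≤ w j) {f : Fin m → Fin n → ℝ} (hf : ∀ j i, f j i = (n : ℝ)⁻¹) :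
    margPEA u f := by
  rcases Nat.eq_zero_or_pos n with rfl | hn
  · rintro ⟨-, -, -, -, i, -⟩
    exact i.elim0
  refine margPEA_of_forall_le fun q _ hq1 => ?_
  simp only [hu, hf]
  rw [sum_comm, sum_comm (γ := Fin n)]
  refine sum_le_sum fun j _ => ?_
  rw [← sum_mul, ← sum_mul, sum_const, card_univ, Fintype.card_fin, nsmul_eq_mul,
    mul_inv_cancel₀ (by positivity), one_mul]
  exact mul_le_of_le_one_left (hw j) (hq1 j)

end Efficiency

/-- With identical strictly positive cardinal utilities
(`u i j = w j > 0` for all agents `i`), Balanced Like is ex ante equivalent to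
Like, and both are Pareto efficient ex post and ex ante. -/
theorem stmt17 (n m : ℕ) (w : Fin m → ℝ) (hw : ∀ j, 0 < w j)
    (u : Bids n m) (hu : ∀ i j, u i j = w j) :
    (∀ (j : Fin m) (i : Fin n), genMarg (blDist u) j i = genMarg (likeDist u) j i) ∧
    (∀ π : Alloc n m, 0 < blDist u π → ParetoEff u π) ∧
    (∀ π : Alloc n m, 0 < likeDist u π → ParetoEff u π) ∧
    margPEA u (genMarg (blDist u)) ∧ margPEA u (genMarg (likeDist u)) := by
  have hpos : ∀ i j, 0 < u i j := fun i j => hu i j ▸ hw j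
  have hsymm : ∀ a b j, u a j = u b j := fun a b j => by rw [hu, hu]
  have hw' : ∀ j, 0 ≤ w j := fun j => (hw j).le
  have hbl := genMarg_blDist hpos hsymm
  have hlike := genMarg_likeDist hpos hsymm
  exact ⟨fun j i => (hbl j i).trans (hlike j i).symm,
    fun _ hπ => paretoEff_of_seqUniformDist_pos hu hw' (blDist_eq_seqUniformDist u ▸ hπ),
    fun _ hπ => paretoEff_of_seqUniformDist_pos hu hw' (likeDist_eq_seqUniformDist u ▸ hπ),
    margPEA_of_identical_of_uniform hu hw' hbl, margPEA_of_identical_of_uniform hu hw' hlike⟩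

end
end

section
/- The Maximum Like mechanism is not a step mechanism and is not online strategy-proof: there exists an instance where an agent can strictly increase their expected utility by overbidding on a single item. -/
/-!
Online fair division with additive utilities (Aleksandrov & Walsh).

Agents are `Fin n`, items `Fin m` arriving in index order. A bid/utility
profile is `Bids n m`. An allocation assigns to each item an optional agent
(`none` = discarded). An online mechanism returns, for every instance, a
probability distribution over allocations, where the distribution over the
first `j` items depends only on the bids for the first `j` items.
-/

open Finset
open scoped Classical

noncomputable section

def uW : Bids 2 1 := fun a _ => if a = 0 then 1 else 2

lemma marg1 (u : Bids 2 1) (i : Fin 2) :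
    genMarg (mlDist u) 0 i
      = if i ∈ mlFeasSet u 0 then ((mlFeasSet u 0).card : ℝ)⁻¹ else 0 := by
  unfold genMarg
  rw [Finset.sum_filter, Fintype.sum_eq_single (fun _ => some i : Alloc 2 1)]
  · simp only [if_pos rfl]
    simp [mlDist, Fin.prod_univ_one]
  · intro π hπ
    have h0 : π 0 ≠ some i := by
      intro h
      exact hπ (funext fun k => by fin_cases k; exact h)
    simp [h0]

lemma feas_uW : mlFeasSet uW 0 = {1} := by
  ext a
  fin_cases a <;>
    simp [mlFeasSet, uW, Fin.forall_fin_two] <;> norm_num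

lemma feas_uW' : mlFeasSet (setBid uW 0 0 3) 0 = {0} := by
  ext a
  fin_cases a <;>
    simp [mlFeasSet, uW, setBid, Fin.forall_fin_two] <;> norm_num

/-- The Maximum Like mechanism is not a step mechanism and is not
online strategy-proof: its item probabilities are not invariant under the
magnitude of positive bids, and there is an instance on which an agent strictly
increases their expected utility by overbidding on a single item. -/
theorem stmt19 :
    (¬ ∀ (n m : ℕ) (v : Bids n m) (i : Fin n) (j : Fin m) (c : ℝ),
        (∀ a k, 0 ≤ v a k) → 0 < c → 0 < v i j →
        genMarg (mlDist (setBid v i j c)) j i = genMarg (mlDist v) j i) ∧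
    (∃ (n m : ℕ) (u : Bids n m), (∀ a k, 0 ≤ u a k) ∧
      ∃ (i : Fin n) (j : Fin m) (c : ℝ), 0 ≤ c ∧
        ∑ h ∈ univ.filter (fun h : Fin m => h ≤ j), genMarg (mlDist u) h i * u i h
        < ∑ h ∈ univ.filter (fun h : Fin m => h ≤ j),
            genMarg (mlDist (setBid u i j c)) h i * u i h) := by
  have hm : genMarg (mlDist uW) 0 0 = 0 := by
    rw [marg1, feas_uW]; norm_num
  have hm' : genMarg (mlDist (setBid uW 0 0 3)) 0 0 = 1 := by
    rw [marg1, feas_uW']; norm_num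
  constructor
  · intro H
    have := H 2 1 uW 0 0 3 (by intro a k; fin_cases a <;> simp [uW] <;> norm_num)
      (by norm_num) (by simp [uW])
    rw [hm, hm'] at this
    norm_num at this
  · refine ⟨2, 1, uW, ?_, 0, 0, 3, by norm_num, ?_⟩
    · intro a k; fin_cases a <;> simp [uW] <;> norm_num
    · have hfil : (univ.filter (fun h : Fin 1 => h ≤ (0 : Fin 1))) = {0} := by decide
      rw [hfil]
      simp [hm, hm', uW]
end
end
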